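/- arXiv:1703.08692 — 2 statements merged into one kernel-verified Lean document; each statement's English description precedes it below -/
import Mathlib

section
/- Let M_A, M_B ∈ ℝ^{2×2} be symmetric positive definite matrices and c_A, c_B ∈ ℝ², and let A, B ∈ ℝ^{3×3} be the corresponding homogeneous ellipse matrices A = [[M_A, −M_A·c_A], [−c_Aᵀ·M_A, c_Aᵀ·M_A·c_A − 1]] and B = [[M_B, −M_B·c_B], [−c_Bᵀ·M_B, c_Bᵀ·M_B·c_B − 1]]. Then the characteristic polynomial f(λ) = det(λ·A − B) always has at least one positive real root, i.e., there exists λ* ∈ ℝ with λ* > 0 and f(λ*) = 0. -/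
/-!
Write `f(λ) = det(λA − B)`. Clearing the last column of either homogeneous matrix by the
first two columns weighted by the centre shows `det A = −det M_A < 0` and
`det B = −det M_B`, so `f(0) = det(−B) = det M_B > 0`. The leading coefficient of the cubic `f`
is `det A < 0`, so `f` is negative for large `λ`, and the intermediate value theorem gives a
positive root.
-/

/-- The homogeneous matrix of the solid planar ellipse
`{p ∈ ℝ² : (p − c)ᵀ·M·(p − c) ≤ 1}`: in block form `[[M, −M·c], [−cᵀ·M, cᵀ·M·c − 1]]`. -/
def ellipseHomMat (M : Matrix (Fin 2) (Fin 2) ℝ) (c : Fin 2 → ℝ) :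
    Matrix (Fin 3) (Fin 3) ℝ :=
  ![![M 0 0, M 0 1, -(M.mulVec c) 0],
    ![M 1 0, M 1 1, -(M.mulVec c) 1],
    ![-(Matrix.vecMul c M) 0, -(Matrix.vecMul c M) 1,
      dotProduct c (M.mulVec c) - 1]]

lemma det_ellipseHomMat (M : Matrix (Fin 2) (Fin 2) ℝ) (c : Fin 2 → ℝ) :
    (ellipseHomMat M c).det = -M.det := by
  rw [Matrix.det_fin_three]
  simp only [ellipseHomMat, Matrix.mulVec, Matrix.vecMul, dotProduct, Fin.sum_univ_two,
    Matrix.cons_val', Matrix.cons_val_zero, Matrix.cons_val_fin_one, Matrix.cons_val_one,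
    Matrix.cons_val, Matrix.det_fin_two]
  ring

section SmulSubDet

variable {n : Type*} [Fintype n] [DecidableEq n]

lemma det_smul_sub_eq_pow_mul (A B : Matrix n n ℝ) {t : ℝ} (ht : t ≠ 0) :
    (t • A - B).det = t ^ Fintype.card n * (A - t⁻¹ • B).det := by
  rw [← Matrix.det_smul, smul_sub, smul_smul, mul_inv_cancel₀ ht, one_smul]

lemma eventually_det_smul_sub_neg {A : Matrix n n ℝ} (hA : A.det < 0) (B : Matrix n n ℝ) :
    ∀ᶠ t : ℝ in Filter.atTop, (t • A - B).det < 0 := by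
  have hcont : Continuous fun s : ℝ => (A - s • B).det := by fun_prop
  have hlim : Filter.Tendsto (fun t : ℝ => (A - t⁻¹ • B).det) Filter.atTop (nhds A.det) := by
    simpa [Function.comp_def] using (hcont.tendsto 0).comp tendsto_inv_atTop_zero
  filter_upwards [hlim.eventually (gt_mem_nhds hA), Filter.eventually_gt_atTop 0]
    with t hneg hpos
  rw [det_smul_sub_eq_pow_mul A B hpos.ne']
  exact mul_neg_of_pos_of_neg (pow_pos hpos _) hneg

lemma exists_pos_det_smul_sub_eq_zero {A : Matrix n n ℝ} (hA : A.det < 0) {B : Matrix n n ℝ}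
    (hB : 0 < (-B).det) : ∃ l : ℝ, 0 < l ∧ (l • A - B).det = 0 := by
  obtain ⟨t, htneg, htpos⟩ :=
    ((eventually_det_smul_sub_neg hA B).and (Filter.eventually_gt_atTop 0)).exists
  have hcont : Continuous fun s : ℝ => (s • A - B).det := by fun_prop
  obtain ⟨l, hl, hroot⟩ := intermediate_value_Ioo' htpos.le hcont.continuousOn
    (show (0 : ℝ) ∈ Set.Ioo _ _ from ⟨htneg, by simpa using hB⟩)
  exact ⟨l, hl.1, hroot⟩

end SmulSubDet

theorem ellipse_charPoly_has_positive_root_general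
    (MA MB : Matrix (Fin 2) (Fin 2) ℝ) (cA cB : Fin 2 → ℝ)
    (hMA : MA.PosDef)
    (hMB : MB.PosDef) :
    ∃ l : ℝ, 0 < l ∧ (l • ellipseHomMat MA cA - ellipseHomMat MB cB).det = 0 := by
  refine exists_pos_det_smul_sub_eq_zero ?_ ?_
  · rw [det_ellipseHomMat]
    linarith [hMA.det_pos]
  · rw [Matrix.det_neg, det_ellipseHomMat]
    norm_num [hMB.det_pos]

/-- For two solid planar ellipses with symmetric positive definite shape
matrices `M_A, M_B` and centers `c_A, c_B`, the characteristic polynomial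
`f(λ) = det(λ·A − B)` of their homogeneous matrices always has at least one positive
real root. -/
theorem ellipse_charPoly_has_positive_root
    (MA MB : Matrix (Fin 2) (Fin 2) ℝ) (cA cB : Fin 2 → ℝ)
    (hMAsymm : MA.IsSymm) (hMA : MA.PosDef)
    (hMBsymm : MB.IsSymm) (hMB : MB.PosDef) :
    ∃ l : ℝ, 0 < l ∧ (l • ellipseHomMat MA cA - ellipseHomMat MB cB).det = 0 :=
  ellipse_charPoly_has_positive_root_general MA MB cA cB hMA hMB
end

section
/- Let M_A, M_B ∈ ℝ^{2×2} be symmetric positive definite matrices and c_A, c_B ∈ ℝ². Let 𝒜 = {p ∈ ℝ² : (p − c_A)ᵀ·M_A·(p − c_A) ≤ 1} and ℬ = {p ∈ ℝ² : (p − c_B)ᵀ·M_B·(p − c_B) ≤ 1} be the corresponding solid ellipses, with interiors 𝒜° = {p : (p − c_A)ᵀ·M_A·(p − c_A) < 1} and ℬ° = {p : (p − c_B)ᵀ·M_B·(p − c_B) < 1}, and let A, B ∈ ℝ^{3×3} be their homogeneous matrices. Then 𝒜 ∩ ℬ ≠ ∅ and 𝒜° ∩ ℬ° = ∅ (the ellipses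 touch externally) if and only if the characteristic polynomial f(λ) = det(λ·A − B) has a negative real root of multiplicity at least two, i.e., there exists λ* < 0 with f(λ*) = 0 and f′(λ*) = 0. -/
/-- The solid planar ellipse `{p ∈ ℝ² : (p − c)ᵀ·M·(p − c) ≤ 1}`. -/
def solidEllipse (M : Matrix (Fin 2) (Fin 2) ℝ) (c : Fin 2 → ℝ) :
    Set (Fin 2 → ℝ) :=
  {p | dotProduct (p - c) (M.mulVec (p - c)) ≤ 1}

/-- The open planar ellipse `{p ∈ ℝ² : (p − c)ᵀ·M·(p − c) < 1}` (the interior of the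
solid ellipse). -/
def openEllipse (M : Matrix (Fin 2) (Fin 2) ℝ) (c : Fin 2 → ℝ) :
    Set (Fin 2 → ℝ) :=
  {p | dotProduct (p - c) (M.mulVec (p - c)) < 1}

/-!
For `t ≤ 0` let `G_t(p) = (q_B(p) - 1) - t (q_A(p) - 1)`, where `q_A(p) = (p - c_A)ᵀ M_A (p - c_A)`;
it is the quadratic form of the pencil `B - t A` at `(p, 1)`. Completing the square gives
`f(t) + det(M_B - t M_A) G_t(p) ≥ 0`, with equality at the critical point of `G_t`.

If the ellipses touch at `p`, then `p` lies on both boundaries and the normals `M_A (p - c_A)`,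
`M_B (p - c_B)` point in opposite directions, so `p` is the critical point of `G_t` for some
`t < 0`. As `G_s(p) = 0` for every `s`, this gives `f(t) = 0` and `f ≥ 0` on `s ≤ 0`, so `t` is a
double root. Conversely, at a negative root `l` we get `G_l ≥ 0`, which keeps the interiors apart,
and `G_l(p) = 0` at the critical point `p` of `G_l`. Then `s ↦ f(s) + det(M_B - s M_A) G_s(p)` is
minimal at `l`; as `f'(l) = 0`, its derivative there is `det(M_B - l M_A) (1 - q_A(p))`, so
`q_A(p) = 1` and then `q_B(p) = 1`.
-/

open Matrix Filter Topology

def ellipseForm {n : Type*} [Fintype n] (M : Matrix n n ℝ) (c p : n → ℝ) : ℝ :=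
  (p - c) ⬝ᵥ M *ᵥ (p - c)

section General

variable {n : Type*} [Fintype n]

theorem exists_pos_smul_add_eq_zero_of_forall_nonneg_or {a b : n → ℝ} (ha : a ≠ 0) (hb : b ≠ 0)
    (h : ∀ v, 0 ≤ a ⬝ᵥ v ∨ 0 ≤ b ⬝ᵥ v) : ∃ μ : ℝ, 0 < μ ∧ μ • a + b = 0 := by
  have hα : 0 < a ⬝ᵥ a := by simpa using dotProduct_star_self_pos_iff.2 ha
  have hker : ∀ v, a ⬝ᵥ v = 0 → b ⬝ᵥ v = 0 := by
    intro v hav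
    by_contra hbv
    -- along `s • v - a` the first product is `-(a ⬝ᵥ a) < 0`, while the second is affine in `s`
    have hneg : a ⬝ᵥ (((a ⬝ᵥ b - 1) / (b ⬝ᵥ v)) • v - a) < 0 := by
      simpa [dotProduct_sub, hav] using hα
    have := (h _).resolve_left hneg.not_ge
    rw [dotProduct_sub, dotProduct_smul, smul_eq_mul, div_mul_cancel₀ _ hbv,
      dotProduct_comm b a] at this
    linarith
  set α := a ⬝ᵥ a
  set x := a ⬝ᵥ b
  have hw : a ⬝ᵥ (α • b - x • a) = 0 := by
    simp only [dotProduct_sub, dotProduct_smul, smul_eq_mul, α, x]; ring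
  have hpar : α • b = x • a := by
    have hww : (α • b - x • a) ⬝ᵥ (α • b - x • a) = 0 := by
      rw [sub_dotProduct, smul_dotProduct, smul_dotProduct, hker _ hw, hw]
      simp
    exact sub_eq_zero.1 (dotProduct_self_eq_zero.1 hww)
  have hx : x < 0 := by
    have hx0 : x ≠ 0 := fun h0 => hb (by simpa [h0, hα.ne'] using hpar)
    have := (h (-a)).resolve_left (by simpa using hα.not_ge)
    rw [dotProduct_neg, dotProduct_comm] at this
    exact lt_of_le_of_ne (by linarith) hx0
  refine ⟨-x / α, div_pos (neg_pos.2 hx) hα, smul_right_injective _ hα.ne' ?_⟩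
  simp only [smul_add, smul_smul, mul_div_cancel₀ _ hα.ne', hpar, smul_zero]
  simp

theorem ellipseForm_add_smul {M : Matrix n n ℝ} (hM : M.IsSymm) (c p v : n → ℝ) (e : ℝ) :
    ellipseForm M c (p + e • v) =
      ellipseForm M c p + 2 * e * (M *ᵥ (p - c) ⬝ᵥ v) + e ^ 2 * (v ⬝ᵥ M *ᵥ v) := by
  have hsymm : (p - c) ⬝ᵥ M *ᵥ v = M *ᵥ (p - c) ⬝ᵥ v := by
    rw [dotProduct_mulVec, ← mulVec_transpose, hM.eq, dotProduct_comm]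
  have hshift : p + e • v - c = (p - c) + e • v := by abel
  simp only [ellipseForm, hshift, mulVec_add, mulVec_smul, dotProduct_add, add_dotProduct,
    dotProduct_smul, smul_dotProduct, smul_eq_mul, hsymm]
  rw [dotProduct_comm v (M *ᵥ (p - c))]
  ring

theorem ellipseForm_center_add_smul (M : Matrix n n ℝ) (c p : n → ℝ) (t : ℝ) :
    ellipseForm M c (c + t • (p - c)) = t ^ 2 * ellipseForm M c p := by
  simp only [ellipseForm, add_sub_cancel_left, mulVec_smul, dotProduct_smul, smul_dotProduct,
    smul_eq_mul]
  ring

theorem continuous_ellipseForm (M : Matrix n n ℝ) (c : n → ℝ) : Continuous (ellipseForm M c) := by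
  unfold ellipseForm
  fun_prop

theorem eventually_ellipseForm_add_smul_lt_one {M : Matrix n n ℝ} (hM : M.IsSymm) {c p v : n → ℝ}
    (hp : ellipseForm M c p ≤ 1) (hv : M *ᵥ (p - c) ⬝ᵥ v < 0) :
    ∀ᶠ e in 𝓝[>] (0 : ℝ), ellipseForm M c (p + e • v) < 1 := by
  have hlim : Tendsto (fun e : ℝ => 2 * (M *ᵥ (p - c) ⬝ᵥ v) + e * (v ⬝ᵥ M *ᵥ v)) (𝓝[>] 0)
      (𝓝 (2 * (M *ᵥ (p - c) ⬝ᵥ v))) := by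
    have hcont : Continuous fun e : ℝ => 2 * (M *ᵥ (p - c) ⬝ᵥ v) + e * (v ⬝ᵥ M *ᵥ v) := by
      fun_prop
    simpa using (hcont.tendsto 0).mono_left nhdsWithin_le_nhds
  filter_upwards [hlim.eventually_lt_const (by linarith : 2 * (M *ᵥ (p - c) ⬝ᵥ v) < 0),
    self_mem_nhdsWithin] with e he (he0 : 0 < e)
  rw [ellipseForm_add_smul hM]
  nlinarith [mul_neg_of_pos_of_neg he0 he]

theorem differentiable_det [DecidableEq n] {f : ℝ → Matrix n n ℝ}
    (hf : ∀ i j, Differentiable ℝ fun t => f t i j) : Differentiable ℝ fun t => (f t).det := by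
  simp only [det_apply]
  fun_prop

end General

theorem isOpen_openEllipse (M : Matrix (Fin 2) (Fin 2) ℝ) (c : Fin 2 → ℝ) :
    IsOpen (openEllipse M c) :=
  isOpen_lt (continuous_ellipseForm M c) continuous_const

theorem solidEllipse_subset_closure_openEllipse (M : Matrix (Fin 2) (Fin 2) ℝ) (c : Fin 2 → ℝ) :
    solidEllipse M c ⊆ closure (openEllipse M c) := by
  intro p (hp : ellipseForm M c p ≤ 1)
  have hlim : Tendsto (fun t : ℝ => c + t • (p - c)) (𝓝[<] 1) (𝓝 p) := by
    have hcont : Continuous fun t : ℝ => c + t • (p - c) := by fun_prop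
    simpa using (hcont.tendsto 1).mono_left nhdsWithin_le_nhds
  refine mem_closure_of_tendsto hlim ?_
  filter_upwards [Ioo_mem_nhdsLT (show (0 : ℝ) < 1 by norm_num)] with t ht
  show ellipseForm M c (c + t • (p - c)) < 1
  rw [ellipseForm_center_add_smul]
  nlinarith [mul_nonneg (sq_nonneg t) (sub_nonneg.2 hp), ht.1, ht.2]

theorem ellipseForm_eq_one_of_openEllipse_inter_eq_empty {MA MB : Matrix (Fin 2) (Fin 2) ℝ}
    {cA cB p : Fin 2 → ℝ} (hpA : p ∈ solidEllipse MA cA) (hpB : p ∈ solidEllipse MB cB)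
    (hdisj : openEllipse MA cA ∩ openEllipse MB cB = ∅) : ellipseForm MA cA p = 1 := by
  refine le_antisymm hpA (not_lt.1 fun hlt => ?_)
  obtain ⟨q, hq⟩ := mem_closure_iff.1 (solidEllipse_subset_closure_openEllipse MB cB hpB) _
    (isOpen_openEllipse MA cA) hlt
  exact Set.eq_empty_iff_forall_notMem.1 hdisj q hq

theorem mulVec_dotProduct_nonneg_or_of_openEllipse_inter_eq_empty
    {MA MB : Matrix (Fin 2) (Fin 2) ℝ} (hA : MA.IsSymm) (hB : MB.IsSymm) {cA cB p : Fin 2 → ℝ}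
    (hpA : p ∈ solidEllipse MA cA) (hpB : p ∈ solidEllipse MB cB)
    (hdisj : openEllipse MA cA ∩ openEllipse MB cB = ∅) (v : Fin 2 → ℝ) :
    0 ≤ MA *ᵥ (p - cA) ⬝ᵥ v ∨ 0 ≤ MB *ᵥ (p - cB) ⬝ᵥ v := by
  by_contra! hneg
  obtain ⟨e, heA, heB⟩ := ((eventually_ellipseForm_add_smul_lt_one hA hpA hneg.1).and
    (eventually_ellipseForm_add_smul_lt_one hB hpB hneg.2)).exists
  exact Set.eq_empty_iff_forall_notMem.1 hdisj _ ⟨heA, heB⟩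

section Pencil

variable (MA MB : Matrix (Fin 2) (Fin 2) ℝ) (cA cB : Fin 2 → ℝ)

def ellipseCharFun (t : ℝ) : ℝ :=
  (t • ellipseHomMat MA cA - ellipseHomMat MB cB).det

def pencilMat (t : ℝ) : Matrix (Fin 2) (Fin 2) ℝ := MB - t • MA

def pencilVec (t : ℝ) : Fin 2 → ℝ := MB *ᵥ cB - t • MA *ᵥ cA

/-- With `p̂ = (p, 1)`, `pencilForm t p = p̂ᵀ (B - t A) p̂`, and `B - t A` has upper left block
`pencilMat t` and upper right column `-pencilVec t`. -/
def pencilForm (t : ℝ) (p : Fin 2 → ℝ) : ℝ :=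
  (ellipseForm MB cB p - 1) - t * (ellipseForm MA cA p - 1)

variable {MA MB}

-- Completing the square, with the denominators `det (pencilMat t)` cleared.
theorem det_sq_mul_pencilForm (hA : MA.IsSymm) (hB : MB.IsSymm) (t : ℝ) (p : Fin 2 → ℝ) :
    (pencilMat MA MB t).det ^ 2 * pencilForm MA MB cA cB t p =
      ((pencilMat MA MB t).det • p - (pencilMat MA MB t).adjugate *ᵥ pencilVec MA MB cA cB t) ⬝ᵥ
        pencilMat MA MB t *ᵥ
          ((pencilMat MA MB t).det • p - (pencilMat MA MB t).adjugate *ᵥ pencilVec MA MB cA cB t) -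
        (pencilMat MA MB t).det * ellipseCharFun MA MB cA cB t := by
  have hA10 : MA 1 0 = MA 0 1 := hA.apply 0 1
  have hB10 : MB 1 0 = MB 0 1 := hB.apply 0 1
  simp only [pencilMat, ellipseCharFun, det_fin_two, det_fin_three, adjugate_fin_two,
    Matrix.sub_apply, Matrix.smul_apply]
  simp only [Fin.isValue, smul_eq_mul, hB10, hA10, pencilForm, ellipseForm, dotProduct,
    Pi.sub_apply, mulVec, Fin.sum_univ_two, neg_sub, pencilVec, mulVec_fin_two, Nat.succ_eq_add_one,
    Nat.reduceAdd, smul_cons, smul_empty, sub_cons, head_cons, tail_cons, sub_self, zero_empty,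
    mulVec_cons, mulVec_empty, add_zero, Pi.smul_apply, Pi.add_apply, Function.comp_apply,
    Matrix.sub_apply, Matrix.smul_apply, cons_val_zero, cons_val_one, cons_val_fin_one,
    ellipseHomMat, neg_add_rev, vecMul, cons_val', cons_val]
  ring

theorem posDef_pencilMat (hA : MA.PosDef) (hB : MB.PosDef) {t : ℝ} (ht : t ≤ 0) :
    (pencilMat MA MB t).PosDef := by
  rw [pencilMat, sub_eq_add_neg, ← neg_smul]
  exact hB.add_posSemidef (hA.posSemidef.smul (neg_nonneg.2 ht))

theorem ellipseCharFun_add_det_mul_pencilForm_nonneg (hA : MA.PosDef) (hB : MB.PosDef) {t : ℝ}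
    (ht : t ≤ 0) (p : Fin 2 → ℝ) :
    0 ≤ ellipseCharFun MA MB cA cB t + (pencilMat MA MB t).det * pencilForm MA MB cA cB t p := by
  have hN := posDef_pencilMat hA hB ht
  have hd := hN.det_pos
  have hsq := det_sq_mul_pencilForm cA cB (isHermitian_iff_isSymm.1 hA.isHermitian)
    (isHermitian_iff_isSymm.1 hB.isHermitian) t p
  have hz := hN.posSemidef.dotProduct_mulVec_nonneg
    ((pencilMat MA MB t).det • p - (pencilMat MA MB t).adjugate *ᵥ pencilVec MA MB cA cB t)
  rw [star_trivial] at hz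
  refine (mul_nonneg_iff_of_pos_left hd).1 ?_
  linear_combination hz - hsq

theorem det_mul_pencilForm_of_mulVec_eq (hA : MA.IsSymm) (hB : MB.IsSymm) {t : ℝ}
    (hd : (pencilMat MA MB t).det ≠ 0) {p : Fin 2 → ℝ}
    (hp : pencilMat MA MB t *ᵥ p = pencilVec MA MB cA cB t) :
    (pencilMat MA MB t).det * pencilForm MA MB cA cB t p = -ellipseCharFun MA MB cA cB t := by
  have hz : (pencilMat MA MB t).det • p - (pencilMat MA MB t).adjugate *ᵥ pencilVec MA MB cA cB t
      = 0 := by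
    rw [← hp, mulVec_mulVec, adjugate_mul, smul_mulVec, one_mulVec, sub_self]
  have hsq := det_sq_mul_pencilForm cA cB hA hB t p
  rw [hz, mulVec_zero, dotProduct_zero, zero_sub] at hsq
  exact mul_left_cancel₀ hd (by linear_combination hsq)

theorem exists_neg_pencilMat_mulVec_eq (hA : MA.IsSymm) (hB : MB.IsSymm) {p : Fin 2 → ℝ}
    (hpA : ellipseForm MA cA p = 1) (hpB : ellipseForm MB cB p = 1)
    (hdisj : openEllipse MA cA ∩ openEllipse MB cB = ∅) :
    ∃ t < 0, pencilMat MA MB t *ᵥ p = pencilVec MA MB cA cB t := by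
  have ha : MA *ᵥ (p - cA) ≠ 0 := fun h => by simp [ellipseForm, h] at hpA
  have hb : MB *ᵥ (p - cB) ≠ 0 := fun h => by simp [ellipseForm, h] at hpB
  obtain ⟨μ, hμ, hcrit⟩ := exists_pos_smul_add_eq_zero_of_forall_nonneg_or ha hb
    (mulVec_dotProduct_nonneg_or_of_openEllipse_inter_eq_empty hA hB hpA.le hpB.le hdisj)
  refine ⟨-μ, neg_lt_zero.2 hμ, ?_⟩
  rw [← sub_eq_zero, ← hcrit]
  simp only [pencilMat, pencilVec, sub_mulVec, mulVec_sub, smul_mulVec]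
  module

theorem exists_neg_double_root_of_touch (hA : MA.PosDef) (hB : MB.PosDef) {p : Fin 2 → ℝ}
    (hpA : p ∈ solidEllipse MA cA) (hpB : p ∈ solidEllipse MB cB)
    (hdisj : openEllipse MA cA ∩ openEllipse MB cB = ∅) :
    ∃ l < 0, ellipseCharFun MA MB cA cB l = 0 ∧ deriv (ellipseCharFun MA MB cA cB) l = 0 := by
  have hA' := isHermitian_iff_isSymm.1 hA.isHermitian
  have hB' := isHermitian_iff_isSymm.1 hB.isHermitian
  have hQA := ellipseForm_eq_one_of_openEllipse_inter_eq_empty hpA hpB hdisj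
  have hQB := ellipseForm_eq_one_of_openEllipse_inter_eq_empty hpB hpA
    (Set.inter_comm (openEllipse MA cA) _ ▸ hdisj)
  have hG : ∀ t, pencilForm MA MB cA cB t p = 0 := fun t => by simp [pencilForm, hQA, hQB]
  obtain ⟨l, hl, hcrit⟩ := exists_neg_pencilMat_mulVec_eq cA cB hA' hB' hQA hQB hdisj
  have hroot : ellipseCharFun MA MB cA cB l = 0 := by
    simpa [hG] using (det_mul_pencilForm_of_mulVec_eq cA cB hA' hB'
      (posDef_pencilMat hA hB hl.le).det_pos.ne' hcrit).symm
  have hmin : IsLocalMin (ellipseCharFun MA MB cA cB) l := by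
    filter_upwards [Iic_mem_nhds hl] with t ht
    simpa [hroot, hG] using ellipseCharFun_add_det_mul_pencilForm_nonneg cA cB hA hB ht p
  exact ⟨l, hl, hroot, hmin.deriv_eq_zero⟩

theorem openEllipse_inter_eq_empty_of_root (hA : MA.PosDef) (hB : MB.PosDef) {l : ℝ} (hl : l ≤ 0)
    (hf : ellipseCharFun MA MB cA cB l = 0) : openEllipse MA cA ∩ openEllipse MB cB = ∅ := by
  refine Set.eq_empty_iff_forall_notMem.2 fun p ⟨hpA, hpB⟩ => ?_
  have hd := (posDef_pencilMat hA hB hl).det_pos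
  have hG : 0 ≤ pencilForm MA MB cA cB l p := by
    simpa [hf, mul_nonneg_iff_of_pos_left hd] using
      ellipseCharFun_add_det_mul_pencilForm_nonneg cA cB hA hB hl p
  have hpA : ellipseForm MA cA p < 1 := hpA
  have hpB : ellipseForm MB cB p < 1 := hpB
  simp only [pencilForm] at hG
  nlinarith

theorem hasDerivAt_ellipseCharFun_add_det_mul_pencilForm (p : Fin 2 → ℝ) (t : ℝ) :
    HasDerivAt
      (fun s => ellipseCharFun MA MB cA cB s + (pencilMat MA MB s).det * pencilForm MA MB cA cB s p)
      (deriv (ellipseCharFun MA MB cA cB) t +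
        (deriv (fun s => (pencilMat MA MB s).det) t * pencilForm MA MB cA cB t p +
          (pencilMat MA MB t).det * -(ellipseForm MA cA p - 1))) t := by
  have hf : Differentiable ℝ (ellipseCharFun MA MB cA cB) := differentiable_det fun i j => by
    simp only [Matrix.sub_apply, Matrix.smul_apply, smul_eq_mul]
    fun_prop
  have hd : Differentiable ℝ fun s => (pencilMat MA MB s).det := differentiable_det fun i j => by
    simp only [pencilMat, Matrix.sub_apply, Matrix.smul_apply, smul_eq_mul]
    fun_prop
  have hG : HasDerivAt (fun s => pencilForm MA MB cA cB s p) (-(ellipseForm MA cA p - 1)) t := by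
    unfold pencilForm
    exact (hasDerivAt_mul_const _).const_sub _
  exact (hf t).hasDerivAt.add ((hd t).hasDerivAt.mul hG)

theorem exists_mem_inter_of_double_root (hA : MA.PosDef) (hB : MB.PosDef) {l : ℝ} (hl : l < 0)
    (hf : ellipseCharFun MA MB cA cB l = 0) (hf' : deriv (ellipseCharFun MA MB cA cB) l = 0) :
    (solidEllipse MA cA ∩ solidEllipse MB cB).Nonempty := by
  have hd : (pencilMat MA MB l).det ≠ 0 := (posDef_pencilMat hA hB hl.le).det_pos.ne'
  set p := (pencilMat MA MB l)⁻¹ *ᵥ pencilVec MA MB cA cB l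
  have hG : pencilForm MA MB cA cB l p = 0 := by
    have hcrit : pencilMat MA MB l *ᵥ p = pencilVec MA MB cA cB l := by
      rw [mulVec_mulVec, mul_nonsing_inv _ (isUnit_iff_ne_zero.2 hd), one_mulVec]
    have := det_mul_pencilForm_of_mulVec_eq cA cB (isHermitian_iff_isSymm.1 hA.isHermitian)
      (isHermitian_iff_isSymm.1 hB.isHermitian) hd hcrit
    rw [hf, neg_zero] at this
    exact (mul_eq_zero.1 this).resolve_left hd
  have hmin : IsLocalMin
      (fun s => ellipseCharFun MA MB cA cB s + (pencilMat MA MB s).det * pencilForm MA MB cA cB s p)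
      l := by
    filter_upwards [Iic_mem_nhds hl] with t ht
    simpa [hf, hG] using ellipseCharFun_add_det_mul_pencilForm_nonneg cA cB hA hB ht p
  have hQA : ellipseForm MA cA p = 1 := by
    have := hmin.hasDerivAt_eq_zero (hasDerivAt_ellipseCharFun_add_det_mul_pencilForm cA cB p l)
    rw [hf', hG, mul_zero, zero_add, zero_add] at this
    linarith [(mul_eq_zero.1 this).resolve_left hd]
  have hQB : ellipseForm MB cB p = 1 := by
    simpa [pencilForm, hQA, sub_eq_zero] using hG
  exact ⟨p, hQA.le, hQB.le⟩

end Pencil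

theorem ellipses_touch_externally_iff_negative_double_root_general
    (MA MB : Matrix (Fin 2) (Fin 2) ℝ) (cA cB : Fin 2 → ℝ)
    (hMA : MA.PosDef)
    (hMB : MB.PosDef) :
    (solidEllipse MA cA ∩ solidEllipse MB cB ≠ ∅ ∧
        openEllipse MA cA ∩ openEllipse MB cB = ∅) ↔
      ∃ l : ℝ, l < 0 ∧
        (fun t : ℝ => (t • ellipseHomMat MA cA - ellipseHomMat MB cB).det) l = 0 ∧
        deriv (fun t : ℝ => (t • ellipseHomMat MA cA - ellipseHomMat MB cB).det) l
          = 0 := by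
  constructor
  · rintro ⟨hne, hdisj⟩
    obtain ⟨p, hpA, hpB⟩ := Set.nonempty_iff_ne_empty.2 hne
    exact exists_neg_double_root_of_touch cA cB hMA hMB hpA hpB hdisj
  · rintro ⟨l, hl, hf, hf'⟩
    exact ⟨(exists_mem_inter_of_double_root cA cB hMA hMB hl hf hf').ne_empty,
      openEllipse_inter_eq_empty_of_root cA cB hMA hMB hl.le hf⟩

/-- Two solid planar ellipses (with symmetric positive definite shape
matrices) touch externally — their closed sets intersect but their interiors do not —
if and only if the characteristic polynomial `f(λ) = det(λ·A − B)` has a negative real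
root of multiplicity at least two, i.e., there is `λ* < 0` with `f(λ*) = 0` and
`f′(λ*) = 0`. -/
theorem ellipses_touch_externally_iff_negative_double_root
    (MA MB : Matrix (Fin 2) (Fin 2) ℝ) (cA cB : Fin 2 → ℝ)
    (hMAsymm : MA.IsSymm) (hMA : MA.PosDef)
    (hMBsymm : MB.IsSymm) (hMB : MB.PosDef) :
    (solidEllipse MA cA ∩ solidEllipse MB cB ≠ ∅ ∧
        openEllipse MA cA ∩ openEllipse MB cB = ∅) ↔
      ∃ l : ℝ, l < 0 ∧
        (fun t : ℝ => (t • ellipseHomMat MA cA - ellipseHomMat MB cB).det) l = 0 ∧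
        deriv (fun t : ℝ => (t • ellipseHomMat MA cA - ellipseHomMat MB cB).det) l
          = 0 :=
  ellipses_touch_externally_iff_negative_double_root_general MA MB cA cB hMA hMB
end
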